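/- arXiv:2012.13512 — 8 statements merged into one kernel-verified Lean document; each statement's English description precedes it below -/
import Mathlib

section
/- Let V be a 2g×2g integer matrix, viewed as a matrix over Λ = ℤ[t^{±1}], let A = tV − Vᵀ, and suppose Δ := det A ≠ 0. Then the assignment v ↦ adj(A)·v (reduced modulo Δ) induces a well-defined isomorphism of Λ-modules κ : Λ^{2g}/(A·Λ^{2g}) → { w ∈ (Λ/(Δ))^{2g} : A·w = 0 }, where adj(A) is the adjugate matrix of A and A acts on (Λ/(Δ))^{2g} by reducing its entries modulo Δ. -/
open LaurentPolynomial

noncomputable section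

abbrev Λ : Type := LaurentPolynomial ℤ

/-- General form over any commutative domain: for a square matrix `A` with
`Δ = det A ≠ 0`, the map `v ↦ adj(A)·v mod Δ` induces an isomorphism
`R^n/(A·R^n) ≃ ker(Ā)` in `(R/Δ)^n`. -/
theorem adjugate_quotient_equiv {R : Type} [CommRing R] [IsDomain R]
    {n : Type} [Fintype n] [DecidableEq n]
    (A : Matrix n n R) (Δ : R) (hΔ : Δ = A.det) (hΔ0 : Δ ≠ 0) :
    ∃ κ : ((n → R) ⧸ LinearMap.range A.mulVecLin) ≃ₗ[R]
        ((LinearMap.ker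
          (Matrix.mulVecLin (A.map (Ideal.Quotient.mk (Ideal.span {Δ}))))).restrictScalars R),
      ∀ v : n → R,
        (κ (Submodule.Quotient.mk v) : n → R ⧸ Ideal.span {Δ}) =
          fun i => Ideal.Quotient.mk (Ideal.span {Δ}) (A.adjugate.mulVec v i) := by
  set I : Ideal R := Ideal.span {Δ} with hI
  set π : R →+* R ⧸ I := Ideal.Quotient.mk I with hπ
  have hπΔ : π Δ = 0 := by
    rw [Ideal.Quotient.eq_zero_iff_mem]
    exact Ideal.mem_span_singleton_self Δ
  -- componentwise reduction map as a linear map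
  set q : (n → R) →ₗ[R] (n → R ⧸ I) :=
    LinearMap.pi (fun i => (Algebra.linearMap R (R ⧸ I)).comp (LinearMap.proj i)) with hq
  have hqapp : ∀ (v : n → R), q v = π ∘ v := by
    intro v
    funext i
    simp [hq, Ideal.Quotient.algebraMap_eq]
    rfl
  set B : Matrix n n (R ⧸ I) := A.map π with hB
  -- key identities
  have hAadj : ∀ w : n → R, A.mulVec (A.adjugate.mulVec w) = Δ • w := by
    intro w
    rw [Matrix.mulVec_mulVec, Matrix.mul_adjugate, ← hΔ, Matrix.smul_mulVec,
      Matrix.one_mulVec]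
  have hadjA : ∀ w : n → R, A.adjugate.mulVec (A.mulVec w) = Δ • w := by
    intro w
    rw [Matrix.mulVec_mulVec, Matrix.adjugate_mul, ← hΔ, Matrix.smul_mulVec,
      Matrix.one_mulVec]
  have hadj_inj : Function.Injective (A.adjugate.mulVec (α := R)) := by
    intro x y h
    have h2 : Δ • x = Δ • y := by
      rw [← hAadj x, ← hAadj y, h]
    funext i
    have := congrFun h2 i
    simp only [Pi.smul_apply, smul_eq_mul] at this
    exact mul_left_cancel₀ hΔ0 this
  -- the raw map
  set f0 : (n → R) →ₗ[R] (n → R ⧸ I) := q.comp A.adjugate.mulVecLin with hf0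
  have hf0app : ∀ v, f0 v = fun i => π (A.adjugate.mulVec v i) := by
    intro v
    rw [hf0]
    simp only [LinearMap.comp_apply, Matrix.mulVecLin_apply, hqapp]
    rfl
  have hmem : ∀ v, f0 v ∈ (LinearMap.ker B.mulVecLin).restrictScalars R := by
    intro v
    rw [Submodule.restrictScalars_mem, LinearMap.mem_ker, Matrix.mulVecLin_apply]
    funext i
    rw [hf0app]
    have : (fun i => π (A.adjugate.mulVec v i)) = π ∘ (A.adjugate.mulVec v) := rfl
    rw [this, ← RingHom.map_mulVec, hAadj]
    simp [hπΔ]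
  set f : (n → R) →ₗ[R] ((LinearMap.ker B.mulVecLin).restrictScalars R) :=
    f0.codRestrict _ hmem with hf
  have hle : LinearMap.range A.mulVecLin ≤ LinearMap.ker f := by
    rintro _ ⟨w, rfl⟩
    rw [LinearMap.mem_ker]
    apply Subtype.ext
    show f0 (A.mulVecLin w) = 0
    rw [hf0app]
    funext i
    rw [Matrix.mulVecLin_apply, hadjA]
    simp [hπΔ]
  set κ₀ := Submodule.liftQ (LinearMap.range A.mulVecLin) f hle with hκ₀
  have hκ₀app : ∀ v : n → R,
      (κ₀ (Submodule.Quotient.mk v) : n → R ⧸ I) =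
        fun i => π (A.adjugate.mulVec v i) := by
    intro v
    have : κ₀ (Submodule.Quotient.mk v) = f v := rfl
    rw [this, hf]
    show f0 v = _
    exact hf0app v
  have hdvd : ∀ x : R, π x = 0 → Δ ∣ x := by
    intro x hx
    rw [Ideal.Quotient.eq_zero_iff_mem, hI, Ideal.mem_span_singleton] at hx
    exact hx
  have hinj : Function.Injective κ₀ := by
    rw [← LinearMap.ker_eq_bot, hκ₀, Submodule.ker_liftQ_eq_bot']
    refine le_antisymm hle ?_
    intro v hv
    rw [LinearMap.mem_ker] at hv
    have hv0 : f0 v = 0 := congrArg Subtype.val hv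
    rw [hf0app] at hv0
    have hdv : ∀ i, Δ ∣ A.adjugate.mulVec v i := by
      intro i
      exact hdvd _ (congrFun hv0 i)
    choose w hw using hdv
    have : A.adjugate.mulVec v = A.adjugate.mulVec (A.mulVec w) := by
      rw [hadjA]
      funext i
      rw [hw i]
      simp
    have hv_eq : v = A.mulVec w := hadj_inj this
    exact ⟨w, hv_eq.symm⟩
  have hsurj : Function.Surjective κ₀ := by
    rintro ⟨wbar, hwbar⟩
    have hlift : ∀ i, ∃ x : R, π x = wbar i := fun i => Ideal.Quotient.mk_surjective (wbar i)
    choose w hw using hlift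
    have hwfun : π ∘ w = wbar := funext hw
    rw [Submodule.restrictScalars_mem, LinearMap.mem_ker, Matrix.mulVecLin_apply] at hwbar
    have hAw : ∀ i, π (A.mulVec w i) = 0 := by
      intro i
      rw [RingHom.map_mulVec, hwfun, ← hB, hwbar]
      rfl
    have hdv : ∀ i, Δ ∣ A.mulVec w i := fun i => hdvd _ (hAw i)
    choose u hu using hdv
    have hadju : A.adjugate.mulVec u = w := by
      have h1 : Δ • A.adjugate.mulVec u = Δ • w := by
        have : A.mulVec w = Δ • u := by
          funext i; rw [hu i]; simp
        calc Δ • A.adjugate.mulVec u = A.adjugate.mulVec (Δ • u) := by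
              rw [Matrix.mulVec_smul]
          _ = A.adjugate.mulVec (A.mulVec w) := by rw [← this]
          _ = Δ • w := hadjA w
      funext i
      have := congrFun h1 i
      simp only [Pi.smul_apply, smul_eq_mul] at this
      exact mul_left_cancel₀ hΔ0 this
    refine ⟨Submodule.Quotient.mk u, ?_⟩
    apply Subtype.ext
    rw [hκ₀app]
    funext i
    rw [hadju]
    exact hw i
  refine ⟨LinearEquiv.ofBijective κ₀ (show Function.Bijective κ₀ from ⟨hinj, hsurj⟩), ?_⟩
  intro v
  rw [LinearEquiv.ofBijective_apply]
  exact hκ₀app v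

/-- For a `2g × 2g` integer matrix `V`, with `A = tV - Vᵀ` over
`Λ = ℤ[t^{±1}]` and `Δ = det A ≠ 0`, the assignment `v ↦ adj(A)·v` (reduced mod `Δ`)
induces a well-defined `Λ`-module isomorphism
`κ : Λ^{2g}/(A·Λ^{2g}) ≃ { w ∈ (Λ/(Δ))^{2g} | A·w = 0 }`. -/
theorem stmt_0 (g : ℕ) (V : Matrix (Fin (2*g)) (Fin (2*g)) ℤ)
    (A : Matrix (Fin (2*g)) (Fin (2*g)) Λ)
    (hA : ∀ i j, A i j = T 1 * (V i j : Λ) - (V j i : Λ))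
    (Δ : Λ) (hΔ : Δ = A.det) (hΔ0 : Δ ≠ 0) :
    ∃ κ : ((Fin (2*g) → Λ) ⧸ LinearMap.range A.mulVecLin) ≃ₗ[Λ]
        ((LinearMap.ker
          (Matrix.mulVecLin (A.map (Ideal.Quotient.mk (Ideal.span {Δ}))))).restrictScalars Λ),
      ∀ v : Fin (2*g) → Λ,
        (κ (Submodule.Quotient.mk v) : Fin (2*g) → Λ ⧸ Ideal.span {Δ}) =
          fun i => Ideal.Quotient.mk (Ideal.span {Δ}) (A.adjugate.mulVec v i) := by
  haveI : IsDomain Λ := NoZeroDivisors.to_isDomain _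
  exact adjugate_quotient_equiv A Δ hΔ hΔ0
end
end

section
/- Let V be a 2g×2g integer matrix, set M = tV − Vᵀ over Λ = ℤ[t^{±1}], and let Δ = det M, assumed nonzero. Suppose u, v, a, b ∈ Λ^{2g} satisfy M·u = Δ·a and M·v = Δ·b. Then Σ_{i} ū_i·b_i = −t^{1−2g}·Σ_{i} ā_i·v_i holds in Λ, where the involution ¯ is applied entrywise to the vectors u and a. -/
open LaurentPolynomial

noncomputable section

/-- Let `V` be a `2g × 2g` integer matrix, `M = tV - Vᵀ` over
`Λ = ℤ[t^{±1}]`, and `Δ = det M ≠ 0`.  If `M·u = Δ·a` and `M·v = Δ·b`, then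
`∑ i, ū_i·b_i = -t^{1-2g}·∑ i, ā_i·v_i`, where `¯` is the involution `t ↦ t⁻¹`. -/
theorem stmt_2 (g : ℕ) (V : Matrix (Fin (2*g)) (Fin (2*g)) ℤ)
    (M : Matrix (Fin (2*g)) (Fin (2*g)) Λ)
    (hM : ∀ i j, M i j = T 1 * (V i j : Λ) - (V j i : Λ))
    (Δ : Λ) (hΔ : Δ = M.det) (hΔ0 : Δ ≠ 0)
    (u v a b : Fin (2*g) → Λ)
    (hu : M.mulVec u = Δ • a) (hv : M.mulVec v = Δ • b) :
    ∑ i, invert (u i) * b i = - T (1 - 2*(g:ℤ)) * ∑ i, invert (a i) * v i := by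
  have hT : (T (-1) : Λ) * T 1 = 1 := by rw [← T_add]; norm_num [T_zero]
  have hMinv : ∀ i j, invert (M i j) = - T (-1) * M j i := by
    intro i j
    rw [hM, hM, map_sub, map_mul, invert_T, map_intCast, map_intCast]
    linear_combination (V j i : Λ) * hT
  have hΔinv : invert Δ = T (-(2*(g:ℤ))) * Δ := by
    have h1 : invert Δ = (M.map ⇑invert).det := by
      rw [hΔ]
      have := RingHom.map_det (RingHomClass.toRingHom (invert (R := ℤ))) M
      rw [RingHom.mapMatrix_apply] at this
      exact this
    have h2 : M.map ⇑invert = (- T (-1) : Λ) • M.transpose := by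
      ext i j
      simp [Matrix.map_apply, hMinv, Matrix.transpose_apply, smul_eq_mul]
    rw [h1, h2, Matrix.det_smul, Matrix.det_transpose, ← hΔ, Fintype.card_fin]
    congr 1
    rw [neg_pow, T_pow, Even.neg_one_pow (even_two_mul g), one_mul]
    push_cast
    ring_nf
  have hcol : ∀ j, ∑ i, M i j * invert (u i) = - T (1 - 2*(g:ℤ)) * Δ * invert (a j) := by
    intro j
    have h := congrArg (fun f => invert (f j)) hu
    simp only [Matrix.mulVec, dotProduct, Pi.smul_apply, smul_eq_mul,
      map_sum, map_mul] at h
    calc ∑ i, M i j * invert (u i)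
        = ∑ i, (- T 1) * (invert (M j i) * invert (u i)) := by
          refine Finset.sum_congr rfl fun i _ => ?_
          rw [hMinv]
          linear_combination (- (M i j * invert (u i))) * hT
      _ = (- T 1) * (invert Δ * invert (a j)) := by rw [← Finset.mul_sum, h]
      _ = - T (1 - 2*(g:ℤ)) * Δ * invert (a j) := by
          rw [hΔinv, T_sub]
          ring
  apply mul_left_cancel₀ hΔ0
  have hΔb : ∀ i, Δ * b i = ∑ j, M i j * v j := by
    intro i
    have h := congrArg (fun f => f i) hv
    simp only [Matrix.mulVec, dotProduct, Pi.smul_apply, smul_eq_mul] at h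
    rw [← h]
  calc Δ * ∑ i, invert (u i) * b i
      = ∑ i, invert (u i) * (Δ * b i) := by
        rw [Finset.mul_sum]
        exact Finset.sum_congr rfl fun i _ => by ring
    _ = ∑ i, ∑ j, invert (u i) * (M i j * v j) := by
        refine Finset.sum_congr rfl fun i _ => ?_
        rw [hΔb, Finset.mul_sum]
    _ = ∑ j, (∑ i, M i j * invert (u i)) * v j := by
        rw [Finset.sum_comm]
        refine Finset.sum_congr rfl fun j _ => ?_
        rw [Finset.sum_mul]
        exact Finset.sum_congr rfl fun i _ => by ring
    _ = ∑ j, - T (1 - 2*(g:ℤ)) * Δ * invert (a j) * v j := by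
        exact Finset.sum_congr rfl fun j _ => by rw [hcol]
    _ = Δ * (- T (1 - 2*(g:ℤ)) * ∑ i, invert (a i) * v i) := by
        rw [Finset.mul_sum, Finset.mul_sum]
        exact Finset.sum_congr rfl fun j _ => by ring
end
end

section
/- Let ℓ, m, n be integers, let V = [[ℓ+m+1, m+1],[m, m+n+1]], M = tV − Vᵀ over Λ = ℤ[t^{±1}], and Δ = det M (which is nonzero). Then the Λ/(Δ)-submodule { w ∈ (Λ/(Δ))² : M·w = 0 } of (Λ/(Δ))² is generated by the two elements v₀ = ((m+n+1)(t−1), (m+1) − m·t) and w₀ = (m − (m+1)·t, (ℓ+m+1)(t−1)), i.e. by the columns of the adjugate matrix adj(M) reduced modulo Δ. -/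
open LaurentPolynomial

noncomputable section

/-- Evaluation of a Laurent polynomial at `t = 1`, as an algebra map `Λ → ℤ`. -/
noncomputable def εone : Λ →ₐ[ℤ] ℤ := AddMonoidAlgebra.lift ℤ ℤ ℤ 1

lemma εone_T : εone (T 1) = 1 := by
  rw [εone, T, AddMonoidAlgebra.lift_single]; simp

lemma εone_cast (a : ℤ) : εone ((a : Λ)) = a := map_intCast _ a

set_option maxHeartbeats 1600000 in
set_option synthInstance.maxHeartbeats 400000 in
/-- For integers `ℓ, m, n`, `V = [[ℓ+m+1, m+1],[m, m+n+1]]`,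
`M = tV - Vᵀ` over `Λ = ℤ[t^{±1}]` and `Δ = det M` (which is nonzero), the
`Λ/(Δ)`-submodule `{ w ∈ (Λ/(Δ))² : M·w = 0 }` is generated by
`v₀ = ((m+n+1)(t-1), (m+1) - m·t)` and `w₀ = (m - (m+1)·t, (ℓ+m+1)(t-1))`,
the columns of `adj(M)` reduced mod `Δ`. -/
theorem stmt_6 (ℓ m n : ℤ)
    (V : Matrix (Fin 2) (Fin 2) ℤ) (hV : V = !![ℓ+m+1, m+1; m, m+n+1])
    (M : Matrix (Fin 2) (Fin 2) Λ)
    (hM : ∀ i j, M i j = T 1 * (V i j : Λ) - (V j i : Λ))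
    (Δ : Λ) (hΔ : Δ = M.det)
    (v₀ w₀ : Fin 2 → Λ ⧸ Ideal.span {Δ})
    (hv₀ : v₀ = ![Ideal.Quotient.mk (Ideal.span {Δ}) (((m+n+1 : ℤ) : Λ) * (T 1 - 1)),
                  Ideal.Quotient.mk (Ideal.span {Δ}) (((m+1 : ℤ) : Λ) - (m : Λ) * T 1)])
    (hw₀ : w₀ = ![Ideal.Quotient.mk (Ideal.span {Δ}) ((m : Λ) - ((m+1 : ℤ) : Λ) * T 1),
                  Ideal.Quotient.mk (Ideal.span {Δ}) (((ℓ+m+1 : ℤ) : Λ) * (T 1 - 1))]) :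
    Δ ≠ 0 ∧
    LinearMap.ker (Matrix.mulVecLin (M.map (Ideal.Quotient.mk (Ideal.span {Δ})))) =
      Submodule.span (Λ ⧸ Ideal.span {Δ}) {v₀, w₀} := by
  set π := Ideal.Quotient.mk (Ideal.span {Δ}) with hπ
  set a : Λ := T 1 * ((ℓ+m+1 : ℤ) : Λ) - ((ℓ+m+1 : ℤ) : Λ) with ha
  set b : Λ := T 1 * ((m+1 : ℤ) : Λ) - ((m : ℤ) : Λ) with hb
  set c : Λ := T 1 * ((m : ℤ) : Λ) - ((m+1 : ℤ) : Λ) with hc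
  set d : Λ := T 1 * ((m+n+1 : ℤ) : Λ) - ((m+n+1 : ℤ) : Λ) with hd
  have hMe : M = !![a, b; c, d] := by
    ext i j
    fin_cases i <;> fin_cases j <;>
      simp [hM, hV, ha, hb, hc, hd]
  have hdet : Δ = a * d - b * c := by
    rw [hΔ, hMe, Matrix.det_fin_two_of]
  -- Δ evaluates to 1 at t = 1, hence is nonzero
  have hΔ0 : Δ ≠ 0 := by
    intro h
    have h1 : εone Δ = 0 := by rw [h]; simp
    rw [hdet, ha, hb, hc, hd] at h1
    simp only [map_sub, map_mul, εone_T, εone_cast, one_mul] at h1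
    ring_nf at h1
    omega
  -- rewrite the generators as quotient images of the adjugate columns
  have e1 : ((m+n+1 : ℤ) : Λ) * (T 1 - 1) = d := by rw [hd]; push_cast; ring
  have e2 : ((m+1 : ℤ) : Λ) - (m : Λ) * T 1 = -c := by rw [hc]; push_cast; ring
  have e3 : ((m : ℤ) : Λ) - ((m+1 : ℤ) : Λ) * T 1 = -b := by rw [hb]; push_cast; ring
  have e4 : ((ℓ+m+1 : ℤ) : Λ) * (T 1 - 1) = a := by rw [ha]; push_cast; ring
  have hv0' : v₀ = ![π d, π (-c)] := by rw [hv₀, e1, e2]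
  have hw0' : w₀ = ![π (-b), π a] := by rw [hw₀, e3, e4]
  refine ⟨hΔ0, le_antisymm ?_ ?_⟩
  · -- ker ≤ span
    intro x hx
    rw [LinearMap.mem_ker, Matrix.mulVecLin_apply] at hx
    choose y hy using fun i => Ideal.Quotient.mk_surjective (x i)
    have hker : ∀ i, Δ ∣ M.mulVec y i := by
      intro i
      rw [← Ideal.mem_span_singleton, ← Ideal.Quotient.eq_zero_iff_mem, ← hπ]
      have h1 : π (M.mulVec y i) = ((M.map π).mulVec x) i := by
        simp only [Matrix.mulVec, dotProduct, Fin.sum_univ_two, Matrix.map_apply,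
          map_add, map_mul, hy]
        rw [hπ, hy 0, hy 1]
      rw [h1, hx]
      rfl
    choose u hu using hker
    have hmv0 : M.mulVec y 0 = a * y 0 + b * y 1 := by
      rw [hMe]; simp [Matrix.mulVec, dotProduct, Fin.sum_univ_two]
    have hmv1 : M.mulVec y 1 = c * y 0 + d * y 1 := by
      rw [hMe]; simp [Matrix.mulVec, dotProduct, Fin.sum_univ_two]
    have hu0 := hu 0; have hu1 := hu 1
    rw [hmv0] at hu0; rw [hmv1] at hu1
    have hy0 : y 0 = d * u 0 + (-b) * u 1 :=
      mul_left_cancel₀ hΔ0 (by linear_combination d * hu0 - b * hu1 + y 0 * hdet)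
    have hy1 : y 1 = (-c) * u 0 + a * u 1 :=
      mul_left_cancel₀ hΔ0 (by linear_combination (-c) * hu0 + a * hu1 + y 1 * hdet)
    have c0 : x 0 = π (u 0) • v₀ 0 + π (u 1) • w₀ 0 := by
      rw [hv0', hw0', ← hy 0]
      show π (y 0) = π (u 0) * π d + π (u 1) * π (-b)
      rw [← map_mul, ← map_mul, ← map_add]
      exact congrArg _ (by rw [hy0]; ring)
    have c1 : x 1 = π (u 0) • v₀ 1 + π (u 1) • w₀ 1 := by
      rw [hv0', hw0', ← hy 1]
      show π (y 1) = π (u 0) * π (-c) + π (u 1) * π a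
      rw [← map_mul, ← map_mul, ← map_add]
      exact congrArg _ (by rw [hy1]; ring)
    have hxeq : x = π (u 0) • v₀ + π (u 1) • w₀ := by
      funext i
      fin_cases i
      · exact c0
      · exact c1
    rw [hxeq]
    exact Submodule.add_mem _
      (Submodule.smul_mem _ _ (Submodule.subset_span (Set.mem_insert _ _)))
      (Submodule.smul_mem _ _ (Submodule.subset_span (Set.mem_insert_of_mem _ rfl)))
  · -- span ≤ ker
    rw [Submodule.span_le]
    intro x hx
    simp only [Set.mem_insert_iff, Set.mem_singleton_iff] at hx
    simp only [SetLike.mem_coe, LinearMap.mem_ker, Matrix.mulVecLin_apply]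
    have key : ∀ (p q : Λ), Δ ∣ (a * p + b * q) → Δ ∣ (c * p + d * q) →
        (M.map π).mulVec ![π p, π q] = 0 := by
      intro p q h0 h1
      have r0 : (M.map π).mulVec ![π p, π q] 0 = π (a * p + b * q) := by
        rw [hMe]
        simp only [Matrix.mulVec, dotProduct, Fin.sum_univ_two, Matrix.map_apply,
          map_add, map_mul, Matrix.of_apply, Matrix.cons_val', Matrix.cons_val_zero, Matrix.cons_val_one,
          Matrix.head_cons, Matrix.empty_val', Matrix.cons_val_fin_one, Matrix.head_fin_const]
      have r1 : (M.map π).mulVec ![π p, π q] 1 = π (c * p + d * q) := by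
        rw [hMe]
        simp only [Matrix.mulVec, dotProduct, Fin.sum_univ_two, Matrix.map_apply,
          map_add, map_mul, Matrix.of_apply, Matrix.cons_val', Matrix.cons_val_zero, Matrix.cons_val_one,
          Matrix.head_cons, Matrix.empty_val', Matrix.cons_val_fin_one, Matrix.head_fin_const]
      funext i
      fin_cases i
      · show (M.map π).mulVec ![π p, π q] 0 = 0
        rw [r0, hπ, Ideal.Quotient.eq_zero_iff_mem, Ideal.mem_span_singleton]
        exact h0
      · show (M.map π).mulVec ![π p, π q] 1 = 0
        rw [r1, hπ, Ideal.Quotient.eq_zero_iff_mem, Ideal.mem_span_singleton]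
        exact h1
    rcases hx with rfl | rfl
    · rw [hv0']
      exact key d (-c) ⟨1, by rw [hdet]; ring⟩ ⟨0, by ring⟩
    · rw [hw0']
      exact key (-b) a ⟨0, by ring⟩ ⟨1, by rw [hdet]; ring⟩
end
end

section
/- Let m and n be coprime positive integers. Then (t^m − 1)·(t^n − 1) divides (t^{mn} − 1)·(t − 1) in the Laurent polynomial ring ℤ[t^{±1}]. -/
open LaurentPolynomial

open Polynomial in
lemma stmt7_aux (m n : ℕ) (hm : 0 < m) (hn : 0 < n) (h : Nat.Coprime m n) :
    ((X ^ m - 1) * (X ^ n - 1) : ℤ[X]) ∣ (X ^ (m * n) - 1) * (X - 1) := by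
  have hinter : m.divisors ∩ n.divisors = {1} := by
    ext d
    simp only [Finset.mem_inter, Nat.mem_divisors, Finset.mem_singleton]
    constructor
    · rintro ⟨⟨hdm, -⟩, hdn, -⟩
      exact Nat.eq_one_of_dvd_coprimes h hdm hdn
    · rintro rfl
      exact ⟨⟨one_dvd _, hm.ne'⟩, one_dvd _, hn.ne'⟩
  rw [← prod_cyclotomic_eq_X_pow_sub_one hm ℤ, ← prod_cyclotomic_eq_X_pow_sub_one hn ℤ,
    ← prod_cyclotomic_eq_X_pow_sub_one (Nat.mul_pos hm hn) ℤ,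
    ← Finset.prod_union_inter, hinter, Finset.prod_singleton, cyclotomic_one]
  exact mul_dvd_mul_right
    (Finset.prod_dvd_prod_of_subset _ _ _ (by
      intro d hd
      rcases Finset.mem_union.mp hd with hd | hd <;>
        simp only [Nat.mem_divisors] at hd ⊢ <;>
        first
        | exact ⟨hd.1.trans (dvd_mul_right m n), (Nat.mul_pos hm hn).ne'⟩
        | exact ⟨hd.1.trans (dvd_mul_left n m), (Nat.mul_pos hm hn).ne'⟩)) _

/-- For coprime positive integers `m` and `n`,
`(t^m - 1)(t^n - 1)` divides `(t^{mn} - 1)(t - 1)` in `ℤ[t^{±1}]`. -/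
theorem stmt_7 (m n : ℕ) (hm : 0 < m) (hn : 0 < n) (h : Nat.Coprime m n) :
    ((T (m : ℤ) - 1) * (T (n : ℤ) - 1) : LaurentPolynomial ℤ) ∣
      (T ((m : ℤ) * (n : ℤ)) - 1) * (T 1 - 1) := by
  have := map_dvd (Polynomial.toLaurent (R := ℤ)) (stmt7_aux m n hm hn h)
  simp only [map_mul, map_sub, map_one, map_pow, Polynomial.toLaurent_X_pow,
    Polynomial.toLaurent_X, ← Nat.cast_mul] at this
  simpa [pow_one] using this
end

section
/- Let m and n be coprime positive integers, let a, b ∈ ℤ satisfy a·n + b·m = 1, and let Δ_{m,n} ∈ ℤ[t^{±1}] be determined by Δ_{m,n}·(t^m − 1)·(t^n − 1) = (t^{mn} − 1)·(t − 1). Then Δ_{m,n} divides the Laurent polynomial Σ_{i=1}^{m} t^{a·n·i} in ℤ[t^{±1}]; equivalently, Σ_{i=1}^{m} t^{a n i} = 0 in ℤ[t^{±1}]/(Δ_{m,n}). -/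
open LaurentPolynomial

lemma T_dvd_nat (c : ℤ) (k : ℕ) : (T c - 1 : LaurentPolynomial ℤ) ∣ T (c * k) - 1 := by
  have := sub_dvd_pow_sub_pow (T c : LaurentPolynomial ℤ) 1 k
  simpa [T_pow, mul_comm] using this

lemma T_dvd_aux (c z : ℤ) : (T c - 1 : LaurentPolynomial ℤ) ∣ T (c * z) - 1 := by
  rcases le_or_gt 0 z with hz | hz
  · obtain ⟨k, rfl⟩ := Int.eq_ofNat_of_zero_le hz
    exact T_dvd_nat c k
  · obtain ⟨k, rfl⟩ : ∃ k : ℕ, z = -(k : ℤ) := ⟨z.natAbs, by omega⟩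
    have hinv : (T (c * (-(k:ℤ))) : LaurentPolynomial ℤ) * T (c * k) = 1 := by
      rw [← T_add, show c * (-(k:ℤ)) + c * k = 0 by ring, T_zero]
    have h1 : (T (c * (-(k:ℤ))) : LaurentPolynomial ℤ) - 1
        = -T (c * (-(k:ℤ))) * (T (c * k) - 1) := by
      rw [neg_mul, mul_sub, hinv, mul_one, neg_sub]
    rw [h1]
    exact Dvd.dvd.mul_left (T_dvd_nat c k) _

lemma T_sub_one_ne_zero {k : ℤ} (hk : k ≠ 0) : (T k - 1 : LaurentPolynomial ℤ) ≠ 0 := by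
  intro hcontra
  have h1 : (T k : LaurentPolynomial ℤ) = 1 := by linear_combination hcontra
  have h2 := congrArg (fun p : LaurentPolynomial ℤ => p.coeff 0) h1
  rw [show ((1 : LaurentPolynomial ℤ) = T 0) from T_zero.symm] at h2
  simp only [T_apply, hk, if_false] at h2
  simp at h2

/-- For coprime positive integers `m, n`, integers `a, b` with
`a·n + b·m = 1`, and `Δ_{m,n} ∈ ℤ[t^{±1}]` with
`Δ_{m,n}·(t^m - 1)·(t^n - 1) = (t^{mn} - 1)·(t - 1)`, the Laurent polynomial
`Σ_{i=1}^{m} t^{a·n·i}` is divisible by `Δ_{m,n}`. -/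
theorem stmt_10 (m n : ℕ) (hm : 0 < m) (hn : 0 < n) (h : Nat.Coprime m n)
    (a b : ℤ) (hab : a * n + b * m = 1)
    (Δ : LaurentPolynomial ℤ)
    (hΔ : Δ * (T (m : ℤ) - 1) * (T (n : ℤ) - 1) = (T ((m : ℤ) * (n : ℤ)) - 1) * (T 1 - 1)) :
    Δ ∣ ∑ i ∈ Finset.range m, T (a * n * ((i : ℤ) + 1)) := by
  set u : ℤ := a * n with hu
  set S : LaurentPolynomial ℤ := ∑ i ∈ Finset.range m, T (a * n * ((i : ℤ) + 1)) with hS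
  set MN : ℤ := (m : ℤ) * n with hMN
  -- S as geometric-type sum
  have hSgeo : S = T u * ∑ i ∈ Finset.range m, (T u : LaurentPolynomial ℤ) ^ i := by
    rw [hS, Finset.mul_sum]
    refine Finset.sum_congr rfl fun i _ => ?_
    rw [T_pow, ← T_add, hu]
    ring_nf
  -- key identity : S * (T u - 1) = T u * (T (m*u) - 1)
  have hS1 : S * (T u - 1) = T u * (T ((m : ℤ) * u) - 1) := by
    rw [hSgeo, mul_assoc, geom_sum_mul, T_pow]
  -- step 2 : (T MN - 1) ∣ S * (T u - 1)
  have key2 : (T MN - 1 : LaurentPolynomial ℤ) ∣ S * (T u - 1) := by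
    rw [hS1]
    have : (m : ℤ) * u = MN * a := by rw [hu, hMN]; ring
    rw [this]
    exact Dvd.dvd.mul_left (T_dvd_aux MN a) _
  -- step 1 : (T MN - 1) ∣ T (u*n) - T n
  have key1 : (T MN - 1 : LaurentPolynomial ℤ) ∣ T (u * n) - T n := by
    have h1 : (T (u * n) : LaurentPolynomial ℤ) - T n = T (n:ℤ) * (T (MN * (-b)) - 1) := by
      rw [mul_sub, mul_one, ← T_add]
      congr 2
      linear_combination (n : ℤ) * hab + b * hMN
    rw [h1]
    exact Dvd.dvd.mul_left (T_dvd_aux MN (-b)) _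
  -- step 3 : (T MN - 1) ∣ S * (T n - 1)
  have key3 : (T MN - 1 : LaurentPolynomial ℤ) ∣ S * (T (n : ℤ) - 1) := by
    have hsplit : S * (T (n : ℤ) - 1)
        = -(S * (T (u * n) - T n)) + S * (T u - 1) * ∑ i ∈ Finset.range n, (T u : LaurentPolynomial ℤ) ^ i := by
      have hgeom : (∑ i ∈ Finset.range n, (T u : LaurentPolynomial ℤ) ^ i) * (T u - 1)
          = T (u * n) - 1 := by
        rw [geom_sum_mul, T_pow, mul_comm]
      linear_combination (-S) * hgeom
    rw [hsplit]
    exact dvd_add ((key1.mul_left S).neg_right) (key2.mul_right _)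
  -- step 4 : combine with (T 1 - 1) ∣ T m - 1
  have key4 : (T 1 - 1 : LaurentPolynomial ℤ) ∣ T (m : ℤ) - 1 := by
    simpa using T_dvd_aux 1 (m : ℤ)
  have key5 : (T MN - 1 : LaurentPolynomial ℤ) * (T 1 - 1)
      ∣ S * (T (m : ℤ) - 1) * (T (n : ℤ) - 1) := by
    have := mul_dvd_mul key3 key4
    have heq : S * (T (n:ℤ) - 1) * (T (m:ℤ) - 1) = S * (T (m:ℤ) - 1) * (T (n:ℤ) - 1) := by ring
    rwa [heq] at this
  rw [← hΔ] at key5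
  have hne : (T (m:ℤ) - 1 : LaurentPolynomial ℤ) * (T (n:ℤ) - 1) ≠ 0 :=
    mul_ne_zero (T_sub_one_ne_zero (by exact_mod_cast hm.ne')) (T_sub_one_ne_zero (by exact_mod_cast hn.ne'))
  have key6 : Δ * ((T (m:ℤ) - 1) * (T (n:ℤ) - 1)) ∣ S * ((T (m:ℤ) - 1) * (T (n:ℤ) - 1)) := by
    rw [← mul_assoc, ← mul_assoc]; exact key5
  obtain ⟨c, hc⟩ := key6
  refine ⟨c, mul_right_cancel₀ hne ?_⟩
  rw [hc]; ring
end

section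
/- Let m and n be coprime positive integers, let a, b ∈ ℤ satisfy a·n + b·m = 1, and let Δ_{m,n} ∈ ℤ[t^{±1}] be determined by Δ_{m,n}·(t^m − 1)·(t^n − 1) = (t^{mn} − 1)·(t − 1). Then there exists a unique element c of the quotient ring ℤ[t^{±1}]/(Δ_{m,n}) such that c·(1 − t^{bm})·(1 − t^{an}) = n·m in ℤ[t^{±1}]/(Δ_{m,n}). -/
open LaurentPolynomial

open Polynomial Finset
set_option maxHeartbeats 1000000
set_option synthInstance.maxHeartbeats 400000

local notation "L" => LaurentPolynomial ℤ

lemma aux_T_sub_one_ne_zero {k : ℤ} (hk : k ≠ 0) : (T k - 1 : L) ≠ 0 := by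
  intro hc
  have h1 : (T k - 1 : L).coeff k = 1 := by
    rw [AddMonoidAlgebra.coeff_sub, Finsupp.sub_apply]
    simp [T_apply, ← T_zero, Ne.symm hk]
  rw [hc] at h1; simp at h1

lemma aux_geom (w : ℤ) (k : ℕ) :
    (∑ i ∈ range k, (T (w * i) : L)) * (T w - 1) = T (w * k) - 1 := by
  have h := geom_sum_mul (T w : L) k
  rw [T_pow] at h
  rw [show (∑ i ∈ range k, (T (w * i) : L)) = ∑ i ∈ range k, (T w) ^ i from
    Finset.sum_congr rfl (fun i _ => by rw [T_pow, mul_comm]), h, mul_comm w (k : ℤ)]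

lemma aux_count (w : ℤ) (k : ℕ) :
    ((k : ℕ) : L) = (∑ j ∈ range k, T (w * j))
      + (1 - T w) * ∑ j ∈ range k, ∑ i ∈ range j, T (w * i) := by
  induction k with
  | zero => simp
  | succ k ih =>
    rw [Finset.sum_range_succ, Finset.sum_range_succ (f := fun j => ∑ i ∈ range j, (T (w * i) : L))]
    push_cast at ih ⊢
    linear_combination ih + aux_geom w k

lemma aux_T_sub_T_dvd {N e e' : ℤ} (h : N ∣ e - e') : (T N - 1 : L) ∣ T e - T e' := by
  obtain ⟨k, hk⟩ := h
  have base : ∀ k' : ℕ, (T N - 1 : L) ∣ T (N * k') - 1 := by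
    intro k'
    have h2 := sub_dvd_pow_sub_pow (T N : L) 1 k'
    rw [T_pow, one_pow, mul_comm] at h2
    exact h2
  have main : (T N - 1 : L) ∣ T (N * k) - 1 := by
    rcases le_or_gt 0 k with hk0 | hk0
    · obtain ⟨k', rfl⟩ := Int.eq_ofNat_of_zero_le hk0
      exact base k'
    · obtain ⟨k', hk'⟩ := Int.eq_ofNat_of_zero_le (by omega : (0:ℤ) ≤ -k)
      obtain ⟨c, hc⟩ := (by rw [hk']; exact base k' : (T N - 1 : L) ∣ T (N * (-k)) - 1)
      refine ⟨-(T (N * k)) * c, ?_⟩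
      have hT : (T (N * k) : L) * T (N * (-k)) = 1 := by
        rw [← T_add, show N * k + N * (-k) = 0 by ring, T_zero]
      linear_combination (-(T (N * k) : L)) * hc + hT
  have he : (T e - T e' : L) = T e' * (T (N * k) - 1) := by
    rw [mul_sub, mul_one, ← T_add, show e' + N * k = e by omega]
  rw [he]
  exact main.mul_left _

lemma aux_sum_emod (v : ℕ) (hv : 0 < v) (c d w : ℤ) (hcd : (v : ℤ) ∣ c * d - 1) :
    ∑ j ∈ range v, (T (w * ((c * j) % v)) : L) = ∑ j ∈ range v, T (w * j) := by
  have hmod : ∀ x : ℤ, ((d * ((c * x) % v)) % v) = (d * c * x) % v := by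
    intro x
    have h1 : ((c * x) % (v:ℤ)) ≡ c * x [ZMOD (v:ℤ)] := Int.emod_emod_of_dvd _ dvd_rfl
    have h2 := h1.mul_left d
    simpa [Int.ModEq, mul_assoc] using h2
  have hmod' : ∀ x : ℤ, ((c * ((d * x) % v)) % v) = (c * d * x) % v := by
    intro x
    have h1 : ((d * x) % (v:ℤ)) ≡ d * x [ZMOD (v:ℤ)] := Int.emod_emod_of_dvd _ dvd_rfl
    have h2 := h1.mul_left c
    simpa [Int.ModEq, mul_assoc] using h2
  have hdc : (v : ℤ) ∣ d * c - 1 := by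
    rwa [mul_comm]
  have hid : ∀ x : ℤ, 0 ≤ x → x < v → (d * c * x) % v = x := by
    intro x hx0 hxv
    obtain ⟨q, hq⟩ := hdc
    have : d * c * x = x + (v : ℤ) * (q * x) := by linear_combination x * hq
    rw [this, Int.add_mul_emod_self_left, Int.emod_eq_of_lt hx0 hxv]
  have hid' : ∀ x : ℤ, 0 ≤ x → x < v → (c * d * x) % v = x := by
    intro x hx0 hxv
    obtain ⟨q, hq⟩ := hcd
    have : c * d * x = x + (v : ℤ) * (q * x) := by linear_combination x * hq
    rw [this, Int.add_mul_emod_self_left, Int.emod_eq_of_lt hx0 hxv]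
  have hv' : (0:ℤ) < v := by exact_mod_cast hv
  refine Finset.sum_nbij' (fun j => ((c * j) % v).toNat) (fun j => ((d * j) % v).toNat)
    ?_ ?_ ?_ ?_ ?_
  · intro a _
    simp only [mem_range]
    have := Int.emod_lt_of_pos (c * a) hv'
    omega
  · intro a _
    simp only [mem_range]
    have := Int.emod_lt_of_pos (d * a) hv'
    omega
  · intro a ha
    simp only [mem_range] at ha
    have h0 : (0:ℤ) ≤ (c * a) % v := Int.emod_nonneg _ (by omega)
    rw [Int.toNat_of_nonneg h0, hmod, hid a (by omega) (by exact_mod_cast ha)]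
    omega
  · intro a ha
    simp only [mem_range] at ha
    have h0 : (0:ℤ) ≤ (d * a) % v := Int.emod_nonneg _ (by omega)
    rw [Int.toNat_of_nonneg h0, hmod', hid' a (by omega) (by exact_mod_cast ha)]
    omega
  · intro a _
    congr 1
    rw [Int.toNat_of_nonneg (Int.emod_nonneg _ (by omega))]

lemma aux_key_dvd (v : ℕ) (hv : 0 < v) (c d w : ℤ) (hcd : (v : ℤ) ∣ c * d - 1) :
    (T (w * v) - 1 : L) ∣ (∑ j ∈ range v, T (w * c * j)) - ∑ j ∈ range v, T (w * j) := by
  rw [← aux_sum_emod v hv c d w hcd, ← Finset.sum_sub_distrib]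
  apply Finset.dvd_sum
  intro j _
  apply aux_T_sub_T_dvd
  exact ⟨(c * j) / v, by rw [Int.emod_def]; ring⟩

lemma aux_reg (m n : ℕ) (hm : 0 < m) (hn : 0 < n) (Δ : L)
    (hΔ : Δ * (T (m : ℤ) - 1) * (T (n : ℤ) - 1) = (T ((m : ℤ) * (n : ℤ)) - 1) * (T 1 - 1))
    (k : ℤ) (hk : k ≠ 0) (z : L) (hdvd : Δ ∣ LaurentPolynomial.C k * z) : Δ ∣ z := by
  obtain ⟨s, D, hD⟩ := exists_T_pow Δ
  have hpoly : D * (X ^ m - 1) * (X ^ n - 1) = (X ^ (m * n) - 1) * (X - 1) * X ^ s := by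
    apply Polynomial.toLaurent_injective
    simp only [map_mul, map_sub, map_one, Polynomial.toLaurent_X_pow, Polynomial.toLaurent_X, hD]
    push_cast
    linear_combination T (s : ℤ) * hΔ
  have hmn0 : m * n ≠ 0 := by positivity
  have hXm : (X ^ m - 1 : ℤ[X]).Monic := by
    simpa using Polynomial.monic_X_pow_sub_C (1 : ℤ) hm.ne'
  have hXn : (X ^ n - 1 : ℤ[X]).Monic := by
    simpa using Polynomial.monic_X_pow_sub_C (1 : ℤ) hn.ne'
  have hXmn : (X ^ (m * n) - 1 : ℤ[X]).Monic := by
    simpa using Polynomial.monic_X_pow_sub_C (1 : ℤ) hmn0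
  have hX1 : (X - 1 : ℤ[X]).Monic := by
    simpa using Polynomial.monic_X_sub_C (1 : ℤ)
  have hmonicR : ((X ^ (m * n) - 1 : ℤ[X]) * (X - 1) * X ^ s).Monic :=
    (hXmn.mul hX1).mul (Polynomial.monic_X_pow s)
  have hD' : D.Monic := by
    have h3 : (((X ^ m - 1) * (X ^ n - 1) : ℤ[X]) * D).Monic := by
      rw [show ((X ^ m - 1) * (X ^ n - 1) : ℤ[X]) * D = D * (X ^ m - 1) * (X ^ n - 1) by ring,
        hpoly]
      exact hmonicR
    exact (hXm.mul hXn).of_mul_monic_left h3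
  obtain ⟨y, hy⟩ := hdvd
  obtain ⟨sy, Y, hY⟩ := exists_T_pow y
  obtain ⟨sz, Z, hZ⟩ := exists_T_pow z
  have hclaim : D * Y * X ^ sz = Polynomial.C k * Z * X ^ (s + sy) := by
    apply Polynomial.toLaurent_injective
    simp only [map_mul, Polynomial.toLaurent_X_pow, Polynomial.toLaurent_C, hD, hY, hZ]
    push_cast
    rw [T_add]
    linear_combination (-(T (s : ℤ) * T (sy : ℤ) * T (sz : ℤ))) * hy
  have hdvd1 : D ∣ Polynomial.C k * (Z * X ^ (s + sy)) :=
    ⟨Y * X ^ sz, by linear_combination (-1 : ℤ[X]) * hclaim⟩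
  have hmapdvd : D ∣ Z * X ^ (s + sy) := by
    have h4 := Polynomial.map_dvd (Int.castRingHom ℚ) hdvd1
    rw [Polynomial.map_mul, Polynomial.map_C,
      show ((Int.castRingHom ℚ) k) = ((k : ℚ)) from rfl] at h4
    have hku : IsUnit (Polynomial.C ((k : ℚ))) :=
      Polynomial.isUnit_C.mpr (isUnit_iff_ne_zero.mpr (by exact_mod_cast hk))
    have h5 : D.map (Int.castRingHom ℚ) ∣ (Z * X ^ (s + sy)).map (Int.castRingHom ℚ) := by
      obtain ⟨u, hu⟩ := hku
      obtain ⟨w, hw⟩ := h4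
      refine ⟨(↑u⁻¹ : ℚ[X]) * w, ?_⟩
      calc (Z * X ^ (s + sy)).map (Int.castRingHom ℚ)
          = (↑u⁻¹ : ℚ[X]) * (Polynomial.C ((k:ℚ)) * (Z * X ^ (s + sy)).map (Int.castRingHom ℚ)) := by
            rw [← mul_assoc, ← hu, Units.inv_mul, one_mul]
        _ = (↑u⁻¹ : ℚ[X]) * (D.map (Int.castRingHom ℚ) * w) := by rw [← hw]
        _ = D.map (Int.castRingHom ℚ) * ((↑u⁻¹ : ℚ[X]) * w) := by ring
    exact (Polynomial.map_dvd_map _ Int.cast_injective hD').mp h5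
  have h6 : toLaurent D ∣ toLaurent (Z * X ^ (s + sy)) := map_dvd _ hmapdvd
  rw [hD, map_mul, Polynomial.toLaurent_X_pow, hZ] at h6
  obtain ⟨w, hw⟩ := h6
  refine ⟨T (s : ℤ) * w * T (-(sz : ℤ) - ((s + sy : ℕ) : ℤ)), ?_⟩
  have hzeq : z = z * T (sz : ℤ) * T ((s + sy : ℕ) : ℤ) * T (-(sz : ℤ) - ((s + sy : ℕ) : ℤ)) := by
    rw [mul_T_assoc, mul_T_assoc,
      show (sz : ℤ) + (((s + sy : ℕ) : ℤ) + (-(sz : ℤ) - ((s + sy : ℕ) : ℤ))) = 0 by ring,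
      T_zero, mul_one]
  rw [hzeq, hw]; ring

lemma aux_sum_T_congr {s : Finset ℕ} {f g : ℕ → ℤ} (h : ∀ j, f j = g j) :
    ∑ j ∈ s, (T (f j) : L) = ∑ j ∈ s, T (g j) :=
  Finset.sum_congr rfl (fun j _ => by rw [h j])


/-- For coprime positive integers `m, n`, integers `a, b` with
`a·n + b·m = 1`, and `Δ_{m,n} ∈ ℤ[t^{±1}]` with
`Δ_{m,n}·(t^m - 1)·(t^n - 1) = (t^{mn} - 1)·(t - 1)`, there is a unique element `c` of
`ℤ[t^{±1}]/(Δ_{m,n})` with `c·(1 - t^{bm})·(1 - t^{an}) = n·m`. -/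
theorem stmt_11 (m n : ℕ) (hm : 0 < m) (hn : 0 < n) (h : Nat.Coprime m n)
    (a b : ℤ) (hab : a * n + b * m = 1)
    (Δ : LaurentPolynomial ℤ)
    (hΔ : Δ * (T (m : ℤ) - 1) * (T (n : ℤ) - 1) = (T ((m : ℤ) * (n : ℤ)) - 1) * (T 1 - 1)) :
    ∃! c : LaurentPolynomial ℤ ⧸ Ideal.span {Δ},
      c * (1 - Ideal.Quotient.mk (Ideal.span {Δ}) (T (b * m)))
        * (1 - Ideal.Quotient.mk (Ideal.span {Δ}) (T (a * n)))
        = ((n * m : ℕ) : LaurentPolynomial ℤ ⧸ Ideal.span {Δ}) := by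
  set mk := Ideal.Quotient.mk (Ideal.span {Δ}) with hmk
  have h1m : (T (m : ℤ) - 1 : L) ≠ 0 := aux_T_sub_one_ne_zero (by exact_mod_cast hm.ne')
  have h1n : (T (n : ℤ) - 1 : L) ≠ 0 := aux_T_sub_one_ne_zero (by exact_mod_cast hn.ne')
  have hone : (T (1 : ℤ) - 1 : L) ≠ 0 := aux_T_sub_one_ne_zero one_ne_zero
  set Sm : L := ∑ i ∈ range n, T ((m : ℤ) * i) with hSm
  set Sn : L := ∑ i ∈ range m, T ((n : ℤ) * i) with hSn
  set Cm : L := ∑ i ∈ range m, T ((1 : ℤ) * i) with hCm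
  set Cn : L := ∑ i ∈ range n, T ((1 : ℤ) * i) with hCn
  have hSmGeom := aux_geom (m : ℤ) n
  have hSnGeom := aux_geom (n : ℤ) m
  rw [show ((n : ℤ) * (m : ℤ)) = ((m : ℤ) * (n : ℤ)) from mul_comm _ _] at hSnGeom
  have hCnGeom := aux_geom (1 : ℤ) n
  rw [show ((1 : ℤ) * (n : ℤ)) = ((n : ℤ)) from one_mul _] at hCnGeom
  have hCmGeom := aux_geom (1 : ℤ) m
  rw [show ((1 : ℤ) * (m : ℤ)) = ((m : ℤ)) from one_mul _] at hCmGeom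
  have step1 : Δ * (T (n : ℤ) - 1) = Sm * (T 1 - 1) :=
    mul_left_cancel₀ h1m (by linear_combination hΔ - (T (1 : ℤ) - 1) * hSmGeom)
  have step2 : Δ * Cn = Sm :=
    mul_left_cancel₀ hone (by linear_combination Δ * hCnGeom + step1)
  have step1' : Δ * (T (m : ℤ) - 1) = Sn * (T 1 - 1) :=
    mul_left_cancel₀ h1n (by linear_combination hΔ - (T (1 : ℤ) - 1) * hSnGeom)
  have step2' : Δ * Cm = Sn :=
    mul_left_cancel₀ hone (by linear_combination Δ * hCmGeom + step1')
  have hE : Δ ∣ T ((m : ℤ) * (n : ℤ)) - 1 :=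
    ⟨Cn * (T (m : ℤ) - 1), by linear_combination (1 - T ((m : ℤ))) * step2 - hSmGeom⟩
  -- divisibility of the twisted sums
  have hcd1 : ((m : ℕ) : ℤ) ∣ a * (n : ℤ) - 1 := ⟨-b, by linear_combination hab⟩
  have hcd2 : ((n : ℕ) : ℤ) ∣ b * (m : ℤ) - 1 := ⟨-a, by linear_combination hab⟩
  have hkd1 := aux_key_dvd m hm a (n : ℤ) (n : ℤ) hcd1
  have hkd2 := aux_key_dvd n hn b (m : ℤ) (m : ℤ) hcd2
  have hE' : Δ ∣ T ((n : ℤ) * (m : ℤ)) - 1 := by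
    rw [show ((n : ℤ) * (m : ℤ)) = ((m : ℤ) * (n : ℤ)) from mul_comm _ _]; exact hE
  have hTa : Δ ∣ ∑ j ∈ range m, (T (a * (n : ℤ) * j) : L) := by
    rw [aux_sum_T_congr (fun j => by ring : ∀ j : ℕ, a * (n : ℤ) * j = (n : ℤ) * a * j)]
    have hd := dvd_add (dvd_trans hE' hkd1) (⟨Cm, step2'.symm⟩ : Δ ∣ Sn)
    rw [sub_add_cancel] at hd
    exact hd
  have hTb : Δ ∣ ∑ j ∈ range n, (T (b * (m : ℤ) * j) : L) := by
    rw [aux_sum_T_congr (fun j => by ring : ∀ j : ℕ, b * (m : ℤ) * j = (m : ℤ) * b * j)]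
    have hd := dvd_add (dvd_trans hE hkd2) (⟨Cn, step2.symm⟩ : Δ ∣ Sm)
    rw [sub_add_cancel] at hd
    exact hd
  -- counting identities pushed to the quotient
  set Gm : L := ∑ j ∈ range m, ∑ i ∈ range j, T (a * (n : ℤ) * i) with hGm
  set Gn : L := ∑ j ∈ range n, ∑ i ∈ range j, T (b * (m : ℤ) * i) with hGn
  have hTa0 : mk (∑ j ∈ range m, (T (a * (n : ℤ) * j) : L)) = 0 :=
    Ideal.Quotient.eq_zero_iff_mem.mpr (Ideal.mem_span_singleton.mpr hTa)
  have hTb0 : mk (∑ j ∈ range n, (T (b * (m : ℤ) * j) : L)) = 0 :=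
    Ideal.Quotient.eq_zero_iff_mem.mpr (Ideal.mem_span_singleton.mpr hTb)
  have eqm : ((m : ℕ) : LaurentPolynomial ℤ ⧸ Ideal.span {Δ})
      = (1 - mk (T (a * (n : ℤ)))) * mk Gm := by
    have hc := congrArg mk (aux_count (a * (n : ℤ)) m)
    simp only [map_natCast, map_add, map_mul, map_sub, map_one] at hc
    rw [hTa0, zero_add] at hc
    exact hc
  have eqn : ((n : ℕ) : LaurentPolynomial ℤ ⧸ Ideal.span {Δ})
      = (1 - mk (T (b * (m : ℤ)))) * mk Gn := by
    have hc := congrArg mk (aux_count (b * (m : ℤ)) n)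
    simp only [map_natCast, map_add, map_mul, map_sub, map_one] at hc
    rw [hTb0, zero_add] at hc
    exact hc
  set g : LaurentPolynomial ℤ ⧸ Ideal.span {Δ} := mk Gn * mk Gm with hg
  have hmain : g * (1 - mk (T (b * (m : ℤ)))) * (1 - mk (T (a * (n : ℤ))))
      = ((n * m : ℕ) : LaurentPolynomial ℤ ⧸ Ideal.span {Δ}) := by
    push_cast
    linear_combination (-((1 - mk (T (a * (n : ℤ)))) * mk Gm)) * eqn
      - (((n : ℕ) : LaurentPolynomial ℤ ⧸ Ideal.span {Δ})) * eqm
  refine ⟨g, hmain, ?_⟩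
  intro c' hc'
  have hzero : (c' - g) * ((n * m : ℕ) : LaurentPolynomial ℤ ⧸ Ideal.span {Δ}) = 0 := by
    linear_combination g * hc' - c' * hmain
  obtain ⟨z, hz⟩ := Ideal.Quotient.mk_surjective (c' - g)
  have hzz : mk (z * ((n * m : ℕ) : L)) = 0 := by
    simp only [map_mul, map_natCast]
    rw [hz]; exact hzero
  have hdvd : Δ ∣ z * ((n * m : ℕ) : L) :=
    Ideal.mem_span_singleton.mp (Ideal.Quotient.eq_zero_iff_mem.mp hzz)
  have hdvd2 : Δ ∣ LaurentPolynomial.C (((n * m : ℕ) : ℤ)) * z := by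
    rw [show (LaurentPolynomial.C (((n * m : ℕ) : ℤ)) : L) = ((n * m : ℕ) : L) from
      map_natCast LaurentPolynomial.C (n * m), mul_comm]
    exact hdvd
  have hzdvd : Δ ∣ z := aux_reg m n hm hn Δ hΔ _ (by positivity) z hdvd2
  have : mk z = 0 := Ideal.Quotient.eq_zero_iff_mem.mpr (Ideal.mem_span_singleton.mpr hzdvd)
  rw [this] at hz
  exact sub_eq_zero.mp hz.symm
end

section
/- Let m, n ≥ 2 be coprime integers, let a, b ∈ ℤ satisfy a·n + b·m = 1, let Δ_{m,n} ∈ ℤ[t^{±1}] be determined by Δ_{m,n}·(t^m − 1)·(t^n − 1) = (t^{mn} − 1)·(t − 1), let R = ℤ[t^{±1}]/(Δ_{m,n}), and let ι be the ring automorphism of R induced by t ↦ t⁻¹. For y₁, y₂, δ ∈ R define S = Σ_{i=1}^{m} Σ_{j=1}^{n−1} ι( t^{an(i−2)}·(Σ_{s=0}^{j−1} t^{bms})·y₁ ) · ( (Σ_{s=0}^{i−2} t^{ans})·y₂ + δ ) · (1 − t⁻¹), where the inner sum Σ_{s=0}^{i−2} is interpreted as 0 when i = 1. Then (1 − t^{bm})·(1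 − t^{an})·S = n·m·(t − 1)·ι(y₁)·y₂ in R. -/
open LaurentPolynomial

noncomputable section

lemma T_sub_one_ne_zero_s12 (c : ℤ) (hc : c ≠ 0) : (T c - 1 : Λ) ≠ 0 := by
  intro h
  have h1 : ((T c - 1 : Λ)).coeff c = 1 := by
    have e := T_apply (R := ℤ) c 0
    rw [T_zero] at e
    simp [e, Ne.symm hc]
  rw [h] at h1
  simp at h1

lemma T_sub_one_dvd (c d : ℤ) : ((T c - 1 : Λ)) ∣ (T (c * d) - 1) := by
  induction d using Int.induction_on with
  | zero => simp
  | succ k ih =>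
    have key : (T (c * (k+1)) - 1 : Λ) = T c * (T (c*k) - 1) + (T c - 1) := by
      rw [show c * ((k:ℤ)+1) = c + c * k by ring, T_add]
      ring
    rw [key]; exact dvd_add (ih.mul_left _) dvd_rfl
  | pred k ih =>
    have key : (T (c * (-(k:ℤ)-1)) - 1 : Λ)
        = T (-c) * (T (c*(-(k:ℤ))) - 1) - T (-c) * (T c - 1) := by
      rw [show c * (-(k:ℤ)-1) = -c + c * (-(k:ℤ)) by ring, T_add,
          show (1:Λ) = T (-c) * T c by rw [← T_add]; simp]
      ring
    rw [key]; exact dvd_sub (ih.mul_left _) (dvd_rfl.mul_left _)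

lemma geom_T (c : ℤ) (k : ℕ) :
    (∑ s ∈ Finset.range k, (T (c * s) : Λ)) * (T c - 1) = T (c * k) - 1 := by
  have e : ∀ s : ℕ, (T (c * s) : Λ) = (T c)^s := by
    intro s; rw [T_pow]; ring_nf
  simp_rw [e]
  rw [geom_sum_mul]

lemma shift_inv (Δ : Λ) (M N : ℕ)
    (hMN : Ideal.Quotient.mk (Ideal.span {Δ}) ((T ((M:ℤ)*(N:ℤ)) - 1) * (T 1 - 1)) = 0)
    (k k' : ℤ) (hd : ((M:ℤ)*N) ∣ (k - k')) :
    Ideal.Quotient.mk (Ideal.span {Δ}) (T k) * Ideal.Quotient.mk (Ideal.span {Δ}) (T 1 - 1)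
    = Ideal.Quotient.mk (Ideal.span {Δ}) (T k') * Ideal.Quotient.mk (Ideal.span {Δ}) (T 1 - 1) := by
  obtain ⟨d, hdd⟩ := hd
  obtain ⟨e, he⟩ := T_sub_one_dvd ((M:ℤ)*(N:ℤ)) d
  have hTk : (T k : Λ) = T k' * T ((M:ℤ)*(N:ℤ)*d) := by
    rw [← T_add, show k' + (M:ℤ)*(N:ℤ)*d = k by linarith]
  have key : ((T k - T k') * (T 1 - 1) : Λ)
      = (T k' * e) * ((T ((M:ℤ)*(N:ℤ)) - 1) * (T 1 - 1)) := by
    rw [hTk, show (T ((M:ℤ)*(N:ℤ)*d) : Λ) = (T ((M:ℤ)*(N:ℤ)) - 1) * e + 1 by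
      rw [← he]; ring]
    ring
  have h0 : Ideal.Quotient.mk (Ideal.span {Δ}) ((T k - T k') * (T 1 - 1)) = 0 := by
    rw [key, map_mul, hMN, mul_zero]
  rw [map_mul, map_sub, sub_mul] at h0
  linear_combination h0

lemma inv_mod (N : ℕ) (hN : 0 < N) (u v : ℤ) (huv : (N:ℤ) ∣ u*v - 1) (j : ℕ)
    (hj : j ∈ Finset.range N) : ((v * ((u*j) % N)) % N).toNat = j := by
  simp only [Finset.mem_range] at hj
  have hN' : (0:ℤ) < N := by exact_mod_cast hN
  have e1 : ((u*(j:ℤ)) % N) ≡ u*(j:ℤ) [ZMOD (N:ℤ)] := Int.emod_emod_of_dvd _ dvd_rfl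
  have e2 : v*(u*(j:ℤ)) ≡ (j:ℤ) [ZMOD (N:ℤ)] := by
    rw [Int.modEq_iff_dvd]
    have h3 : (j:ℤ) - v*(u*j) = -((u*v-1)*j) := by ring
    rw [h3]
    exact (huv.mul_right _).neg_right
  have e4 : (v * ((u*(j:ℤ)) % N)) % N = (j:ℤ) % N := (e1.mul_left v).trans e2
  rw [e4, Int.emod_eq_of_lt (by positivity) (by exact_mod_cast hj)]
  simp

lemma sum_vanish (Δ : Λ) (M N : ℕ) (hN : 0 < N)
    (hMN : Ideal.Quotient.mk (Ideal.span {Δ}) ((T ((M:ℤ)*(N:ℤ)) - 1) * (T 1 - 1)) = 0)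
    (hG : (∑ s ∈ Finset.range N, Ideal.Quotient.mk (Ideal.span {Δ}) (T ((M:ℤ)*s)))
        * Ideal.Quotient.mk (Ideal.span {Δ}) (T 1 - 1) = 0)
    (c c' : ℤ) (hcc : (N:ℤ) ∣ (c*c' - 1)) :
    (∑ j ∈ Finset.range N, Ideal.Quotient.mk (Ideal.span {Δ}) (T ((M:ℤ)*c*j)))
      * Ideal.Quotient.mk (Ideal.span {Δ}) (T 1 - 1) = 0 := by
  set q := Ideal.Quotient.mk (Ideal.span {Δ}) with hq
  set E := q (T 1 - 1) with hE
  have hN' : (0:ℤ) < N := by exact_mod_cast hN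
  rw [Finset.sum_mul]
  have step : ∀ j ∈ Finset.range N, q (T ((M:ℤ)*c*j)) * E
      = q (T ((M:ℤ) * (((c*(j:ℤ)) % N)))) * E := by
    intro j hj
    refine shift_inv Δ M N hMN _ _ ⟨(c*(j:ℤ))/N, ?_⟩
    rw [Int.emod_def]; ring
  rw [Finset.sum_congr rfl step]
  have reindex : ∑ j ∈ Finset.range N, q (T ((M:ℤ) * ((c*(j:ℤ)) % N))) * E
      = ∑ s ∈ Finset.range N, q (T ((M:ℤ) * (s:ℤ))) * E := by
    refine Finset.sum_nbij' (fun j => ((c*(j:ℤ)) % N).toNat)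
      (fun s => ((c'*(s:ℤ)) % N).toNat) ?_ ?_ ?_ ?_ ?_
    · intro a ha
      simp only [Finset.mem_range]
      have := Int.emod_lt_of_pos (c*(a:ℤ)) hN'
      omega
    · intro a ha
      simp only [Finset.mem_range]
      have := Int.emod_lt_of_pos (c'*(a:ℤ)) hN'
      omega
    · intro a ha
      have h1 : (((c*(a:ℤ)) % N).toNat : ℤ) = (c*(a:ℤ)) % N :=
        Int.toNat_of_nonneg (Int.emod_nonneg _ (by positivity))
      show ((c' * ((((c*(a:ℤ)) % N).toNat : ℕ) : ℤ)) % N).toNat = a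
      rw [h1]
      exact inv_mod N hN c c' hcc a ha
    · intro a ha
      have h1 : (((c'*(a:ℤ)) % N).toNat : ℤ) = (c'*(a:ℤ)) % N :=
        Int.toNat_of_nonneg (Int.emod_nonneg _ (by positivity))
      show ((c * ((((c'*(a:ℤ)) % N).toNat : ℕ) : ℤ)) % N).toNat = a
      rw [h1]
      exact inv_mod N hN c' c (by rwa [mul_comm c' c]) a ha
    · intro a ha
      have h1 : ((((c*(a:ℤ)) % N).toNat : ℕ) : ℤ) = (c*(a:ℤ)) % N :=
        Int.toNat_of_nonneg (Int.emod_nonneg _ (by positivity))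
      show q (T ((M:ℤ) * ((c*(a:ℤ)) % N))) * E
          = q (T ((M:ℤ) * (((((c*(a:ℤ)) % N).toNat : ℕ)) : ℤ))) * E
      rw [h1]
  rw [reindex, ← Finset.sum_mul]
  exact hG

lemma geom_q (Δ : Λ) (M N : ℕ) (hM : M ≠ 0)
    (hΔ : Δ * (T (M:ℤ) - 1) * (T (N:ℤ) - 1) = (T ((M:ℤ)*(N:ℤ)) - 1) * (T 1 - 1)) :
    (∑ s ∈ Finset.range N, Ideal.Quotient.mk (Ideal.span {Δ}) (T ((M:ℤ)*s)))
        * Ideal.Quotient.mk (Ideal.span {Δ}) (T 1 - 1) = 0 := by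
  have hM' : ((M:ℤ)) ≠ 0 := by exact_mod_cast hM
  have key : ((∑ s ∈ Finset.range N, T ((M:ℤ)*s)) * (T 1 - 1) : Λ) = Δ * (T (N:ℤ) - 1) := by
    apply mul_left_cancel₀ (T_sub_one_ne_zero_s12 (M:ℤ) hM')
    have g := geom_T (M:ℤ) N
    linear_combination (T 1 - 1 : Λ) * g - hΔ
  have h0 : Ideal.Quotient.mk (Ideal.span {Δ})
      ((∑ s ∈ Finset.range N, T ((M:ℤ)*s)) * (T 1 - 1)) = 0 := by
    rw [key, map_mul, Ideal.Quotient.eq_zero_iff_mem.mpr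
      (Ideal.subset_span (Set.mem_singleton Δ)), zero_mul]
  rw [map_mul, map_sum] at h0
  exact h0

lemma double_sum_factor {R : Type*} [CommRing R] (s t : Finset ℕ) (f g : ℕ → R) (W : R) :
    ∑ i ∈ s, ∑ j ∈ t, g j * (f i * W) = (∑ j ∈ t, g j) * ((∑ i ∈ s, f i) * W) := by
  simp_rw [Finset.sum_mul, Finset.mul_sum]
  rw [Finset.sum_comm]

set_option maxHeartbeats 4000000 in
set_option synthInstance.maxHeartbeats 400000 in
/-- Let `m, n ≥ 2` be coprime, `a·n + b·m = 1`, let `Δ_{m,n}` satisfy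
`Δ_{m,n}·(t^m - 1)·(t^n - 1) = (t^{mn} - 1)·(t - 1)`, let `R = ℤ[t^{±1}]/(Δ_{m,n})` and let
`ι` be the ring automorphism of `R` induced by `t ↦ t⁻¹`.  For `y₁, y₂, δ ∈ R` set
`S = Σ_{i=1}^{m} Σ_{j=1}^{n-1} ι(t^{an(i-2)}·(Σ_{s=0}^{j-1} t^{bms})·y₁) ·
((Σ_{s=0}^{i-2} t^{ans})·y₂ + δ) · (1 - t⁻¹)` (the inner sum `Σ_{s=0}^{i-2}` being `0`
for `i = 1`).  Then `(1 - t^{bm})·(1 - t^{an})·S = n·m·(t - 1)·ι(y₁)·y₂` in `R`. -/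
theorem stmt_12 (m n : ℕ) (hm : 2 ≤ m) (hn : 2 ≤ n) (h : Nat.Coprime m n)
    (a b : ℤ) (hab : a * n + b * m = 1)
    (Δ : Λ)
    (hΔ : Δ * (T (m : ℤ) - 1) * (T (n : ℤ) - 1) = (T ((m : ℤ) * (n : ℤ)) - 1) * (T 1 - 1))
    (ι : (Λ ⧸ Ideal.span {Δ}) ≃+* (Λ ⧸ Ideal.span {Δ}))
    (hι : ∀ x : Λ, ι (Ideal.Quotient.mk (Ideal.span {Δ}) x) =
      Ideal.Quotient.mk (Ideal.span {Δ}) (invert x))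
    (y₁ y₂ δ S : Λ ⧸ Ideal.span {Δ})
    (hS : S = ∑ i ∈ Finset.range m, ∑ j ∈ Finset.range (n - 1),
      ι (Ideal.Quotient.mk (Ideal.span {Δ})
            (T (a * n * ((i : ℤ) - 1)) * ∑ s ∈ Finset.range (j + 1), T (b * m * (s : ℤ))) * y₁)
        * (Ideal.Quotient.mk (Ideal.span {Δ}) (∑ s ∈ Finset.range i, T (a * n * (s : ℤ))) * y₂ + δ)
        * (1 - Ideal.Quotient.mk (Ideal.span {Δ}) (T (-1)))) :
    (1 - Ideal.Quotient.mk (Ideal.span {Δ}) (T (b * m)))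
      * (1 - Ideal.Quotient.mk (Ideal.span {Δ}) (T (a * n))) * S
    = ((n * m : ℕ) : Λ ⧸ Ideal.span {Δ})
      * (Ideal.Quotient.mk (Ideal.span {Δ}) (T 1) - 1) * ι y₁ * y₂ := by
  set q := Ideal.Quotient.mk (Ideal.span {Δ}) with hq
  set E := q (T 1 - 1) with hEdef
  set u := q (T (b * (m:ℤ))) with hu
  set v := q (T (a * (n:ℤ))) with hv
  set w := q (T (-1 : ℤ)) with hw
  set z := ι y₁ with hz
  have hm0 : m ≠ 0 := by omega
  have hn0 : n ≠ 0 := by omega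
  have hΔ' : Δ * (T (n:ℤ) - 1) * (T (m:ℤ) - 1) = (T ((n:ℤ)*(m:ℤ)) - 1) * (T 1 - 1) := by
    rw [show ((n:ℤ))*(m:ℤ) = (m:ℤ)*(n:ℤ) by ring]
    linear_combination hΔ
  have hΔ0 : q Δ = 0 := Ideal.Quotient.eq_zero_iff_mem.mpr (Ideal.subset_span rfl)
  have hMNmn : q ((T ((m:ℤ)*(n:ℤ)) - 1) * (T 1 - 1)) = 0 := by
    rw [← hΔ, map_mul, map_mul, hΔ0, zero_mul, zero_mul]
  have hMNnm : q ((T ((n:ℤ)*(m:ℤ)) - 1) * (T 1 - 1)) = 0 := by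
    rw [show ((n:ℤ))*(m:ℤ) = (m:ℤ)*(n:ℤ) by ring]; exact hMNmn
  have hGn := geom_q Δ m n hm0 hΔ
  have hGm := geom_q Δ n m hn0 hΔ'
  have hsum1 : (∑ j ∈ Finset.range n, q (T ((-(b*(m:ℤ))) * (j:ℤ)))) * E = 0 := by
    have h1 := sum_vanish Δ m n (by omega) hMNmn hGn (-b) (-m) ⟨-a, by push_cast; linarith⟩
    simp_rw [show ∀ j : ℕ, ((m:ℤ)) * (-b) * (j:ℤ) = (-(b*(m:ℤ))) * (j:ℤ) from fun j => by ring] at h1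
    exact h1
  have hsum2 : (∑ i ∈ Finset.range m, q (T (((n:ℤ)) * (-a) * (i:ℤ)))) * E = 0 :=
    sum_vanish Δ n m (by omega) hMNnm hGm (-a) (-n) ⟨-b, by push_cast; linarith⟩
  obtain ⟨n', hnn⟩ : ∃ k, n = k + 1 := ⟨n - 1, by omega⟩
  have hn'1 : n - 1 = n' := by omega
  -- key players
  set A := ∑ j ∈ Finset.range (n-1), (q (T ((-(b*(m:ℤ))) * (j:ℤ))) - u) with hA
  set Q₂ := ∑ i ∈ Finset.range m, q (T (-(a * (n:ℤ) * ((i:ℤ) - 1)))) with hQ₂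
  set Q := ∑ i ∈ Finset.range m,
    q (T (-(a * (n:ℤ) * ((i:ℤ) - 1)))) * (1 - q (T (a * (n:ℤ) * (i:ℤ)))) with hQ
  -- A * E
  have hPE : A * E = -((n:ℕ) : Λ ⧸ Ideal.span {Δ}) * u * E := by
    rw [Finset.sum_mul, hnn, Finset.sum_range_succ] at hsum1
    have hlast : q (T ((-(b*(m:ℤ))) * ((n':ℕ):ℤ))) * E = u * E := by
      refine shift_inv Δ m n hMNmn _ _ ⟨-b, ?_⟩
      have hc : ((n':ℕ):ℤ) = (n:ℤ) - 1 := by rw [hnn]; push_cast; ring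
      rw [hc]; push_cast; ring
    have hsum1' : (∑ j ∈ Finset.range n', q (T ((-(b*(m:ℤ))) * (j:ℤ))) * E) = -(u * E) := by
      rw [hlast] at hsum1; linear_combination hsum1
    calc A * E = ∑ j ∈ Finset.range n', (q (T ((-(b*(m:ℤ))) * (j:ℤ))) * E - u * E) := by
          rw [hA, hn'1, Finset.sum_mul]
          exact Finset.sum_congr rfl fun j _ => by ring
      _ = (∑ j ∈ Finset.range n', q (T ((-(b*(m:ℤ))) * (j:ℤ))) * E) - n' • (u * E) := by
          rw [Finset.sum_sub_distrib, Finset.sum_const, Finset.card_range]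
      _ = -(u * E) - n' • (u * E) := by rw [hsum1']
      _ = -((n:ℕ) : Λ ⧸ Ideal.span {Δ}) * u * E := by
          rw [nsmul_eq_mul, hnn]; push_cast; ring
  -- Q₂ * E
  have hQ₂v : Q₂ = v * ∑ i ∈ Finset.range m, q (T ((n:ℤ) * (-a) * (i:ℤ))) := by
    rw [hQ₂, Finset.mul_sum]
    refine Finset.sum_congr rfl fun i _ => ?_
    rw [← map_mul, ← T_add]
    congr 2
    ring
  have hQ₂E : Q₂ * E = 0 := by
    rw [hQ₂v, mul_assoc, hsum2, mul_zero]
  -- Q * E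
  have hQQ : Q = Q₂ - m • v := by
    have hper : ∀ i : ℕ, q (T (-(a*(n:ℤ)*((i:ℤ)-1)))) * q (T (a*(n:ℤ)*(i:ℤ))) = v := by
      intro i
      rw [← map_mul, ← T_add]
      congr 2
      ring
    rw [hQ, hQ₂]
    calc (∑ i ∈ Finset.range m,
        q (T (-(a * (n:ℤ) * ((i:ℤ) - 1)))) * (1 - q (T (a * (n:ℤ) * (i:ℤ)))))
        = ∑ i ∈ Finset.range m, (q (T (-(a * (n:ℤ) * ((i:ℤ) - 1)))) - v) := by
          refine Finset.sum_congr rfl fun i _ => ?_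
          rw [mul_sub, mul_one, hper i]
      _ = (∑ i ∈ Finset.range m, q (T (-(a * (n:ℤ) * ((i:ℤ) - 1))))) - m • v := by
          rw [Finset.sum_sub_distrib, Finset.sum_const, Finset.card_range]
  have hQE : Q * E = -((m:ℕ) : Λ ⧸ Ideal.span {Δ}) * v * E := by
    rw [hQQ, sub_mul, hQ₂E, nsmul_eq_mul]
    push_cast
    ring
  -- unit relations
  have huvw : u * v * w = 1 := by
    rw [hu, hv, hw, ← map_mul, ← T_add, ← map_mul, ← T_add,
      show b*(m:ℤ) + a*(n:ℤ) + -1 = 0 by linarith, T_zero, map_one]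
  have hE1 : q (T 1) - 1 = E := by rw [hEdef, map_sub, map_one]
  have hwE : (1 : Λ ⧸ Ideal.span {Δ}) - w = w * E := by
    have hΛ : (T (-1) * (T 1 - 1) : Λ) = 1 - T (-1) := by
      rw [mul_sub, mul_one, ← T_add]
      norm_num
    rw [hw, hEdef, ← map_mul, hΛ, map_sub, map_one]
  -- per-term identity
  have key : ∀ i ∈ Finset.range m, ∀ j ∈ Finset.range (n-1),
      (1 - u) * (1 - v) *
        (ι (q (T (a * (n:ℤ) * ((i : ℤ) - 1)) * ∑ s ∈ Finset.range (j + 1), T (b * (m:ℤ) * (s : ℤ))) * y₁)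
          * (q (∑ s ∈ Finset.range i, T (a * (n:ℤ) * (s : ℤ))) * y₂ + δ)
          * (1 - w))
      = (q (T ((-(b*(m:ℤ))) * (j:ℤ))) - u) *
          ((q (T (-(a * (n:ℤ) * ((i:ℤ) - 1)))) *
            ((1 - q (T (a * (n:ℤ) * (i:ℤ)))) * y₂ + (1 - v) * δ))
            * (z * (w * E))) := by
    intro i _ j _
    have hinv : ι (q (T (a * (n:ℤ) * ((i:ℤ) - 1))
          * ∑ s ∈ Finset.range (j + 1), T (b * (m:ℤ) * (s:ℤ))) * y₁)
        = q (T (-(a * (n:ℤ) * ((i:ℤ) - 1))))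
          * q (∑ s ∈ Finset.range (j+1), T ((-(b*(m:ℤ))) * (s:ℤ))) * z := by
      have hinvΛ : invert ((T (a * (n:ℤ) * ((i:ℤ) - 1))
            * ∑ s ∈ Finset.range (j + 1), T (b * (m:ℤ) * (s:ℤ))) : Λ)
          = T (-(a * (n:ℤ) * ((i:ℤ) - 1)))
            * ∑ s ∈ Finset.range (j+1), T ((-(b*(m:ℤ))) * (s:ℤ)) := by
        simp only [map_mul, map_sum, invert_T]
        congr 1
        refine Finset.sum_congr rfl fun s _ => ?_
        congr 1
        ring
      rw [map_mul ι, hι, hinvΛ, map_mul, ← hz]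
    have e1 : (1 - u) * q (∑ s ∈ Finset.range (j+1), T ((-(b*(m:ℤ))) * (s:ℤ)))
        = q (T ((-(b*(m:ℤ))) * (j:ℤ))) - u := by
      have g := geom_T (-(b*(m:ℤ))) (j+1)
      have ht : (T (b*(m:ℤ)) : Λ) * T (-(b*(m:ℤ))) = 1 := by rw [← T_add]; simp
      have ht2 : (T (b*(m:ℤ)) : Λ) * T ((-(b*(m:ℤ)))*(((j+1 : ℕ)):ℤ))
          = T ((-(b*(m:ℤ)))*(j:ℤ)) := by
        rw [← T_add]; congr 1; push_cast; ring
      have hL : ((1 : Λ) - T (b*(m:ℤ))) * (∑ s ∈ Finset.range (j+1), T ((-(b*(m:ℤ))) * (s:ℤ)))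
          = T ((-(b*(m:ℤ)))*(j:ℤ)) - T (b*(m:ℤ)) := by
        linear_combination (T (b*(m:ℤ)) : Λ) * g
          - (∑ s ∈ Finset.range (j+1), T ((-(b*(m:ℤ))) * (s:ℤ))) * ht + ht2
      have hh := congrArg q hL
      simp only [map_mul, map_sub, map_one] at hh
      exact hh
    have e2 : (1 - v) * q (∑ s ∈ Finset.range i, T (a * (n:ℤ) * (s:ℤ)))
        = 1 - q (T (a * (n:ℤ) * (i:ℤ))) := by
      have g := geom_T (a * (n:ℤ)) i
      have hL : ((1:Λ) - T (a*(n:ℤ))) * (∑ s ∈ Finset.range i, T (a*(n:ℤ)*(s:ℤ)))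
          = 1 - T (a*(n:ℤ)*(i:ℤ)) := by linear_combination -g
      have hh := congrArg q hL
      simp only [map_mul, map_sub, map_one] at hh
      exact hh
    rw [hinv]
    linear_combination
      ((1 - v) * q (T (-(a * (n:ℤ) * ((i:ℤ) - 1)))) * z
          * (q (∑ s ∈ Finset.range i, T (a * (n:ℤ) * (s:ℤ))) * y₂ + δ) * (1 - w)) * e1
      + ((q (T ((-(b*(m:ℤ))) * (j:ℤ))) - u) * q (T (-(a * (n:ℤ) * ((i:ℤ) - 1)))) * z * y₂
          * (1 - w)) * e2
      + ((q (T ((-(b*(m:ℤ))) * (j:ℤ))) - u) * q (T (-(a * (n:ℤ) * ((i:ℤ) - 1)))) * z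
          * ((1 - q (T (a * (n:ℤ) * (i:ℤ)))) * y₂ + (1 - v) * δ)) * hwE
  -- assemble
  have h1 : (1 - u) * (1 - v) * S
      = ∑ i ∈ Finset.range m, ∑ j ∈ Finset.range (n-1),
        (q (T ((-(b*(m:ℤ))) * (j:ℤ))) - u) *
          ((q (T (-(a * (n:ℤ) * ((i:ℤ) - 1)))) *
            ((1 - q (T (a * (n:ℤ) * (i:ℤ)))) * y₂ + (1 - v) * δ))
            * (z * (w * E))) := by
    rw [hS, Finset.mul_sum]
    refine Finset.sum_congr rfl fun i hi => ?_
    rw [Finset.mul_sum]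
    exact Finset.sum_congr rfl fun j hj => key i hi j hj
  have hH : (∑ i ∈ Finset.range m,
      (q (T (-(a * (n:ℤ) * ((i:ℤ) - 1)))) *
        ((1 - q (T (a * (n:ℤ) * (i:ℤ)))) * y₂ + (1 - v) * δ)))
      = Q * y₂ + Q₂ * ((1 - v) * δ) := by
    rw [hQ, hQ₂, Finset.sum_mul, Finset.sum_mul, ← Finset.sum_add_distrib]
    exact Finset.sum_congr rfl fun i _ => by ring
  have hcomm := double_sum_factor (Finset.range m) (Finset.range (n-1))
    (fun i => q (T (-(a * (n:ℤ) * ((i:ℤ) - 1)))) *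
        ((1 - q (T (a * (n:ℤ) * (i:ℤ)))) * y₂ + (1 - v) * δ))
    (fun j => q (T ((-(b*(m:ℤ))) * (j:ℤ))) - u) (z * (w * E))
  have h2 : (1 - u) * (1 - v) * S = A * ((Q * y₂ + Q₂ * ((1 - v) * δ)) * (z * (w * E))) := by
    rw [h1, hcomm, ← hA, hH]
  rw [h2]
  have hcast : ((n * m : ℕ) : Λ ⧸ Ideal.span {Δ})
      = ((n:ℕ) : Λ ⧸ Ideal.span {Δ}) * ((m:ℕ) : Λ ⧸ Ideal.span {Δ}) := by push_cast; ring
  rw [hE1, hcast]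
  linear_combination (y₂*z*w*A) * hQE
    + (-(((m:ℕ) : Λ ⧸ Ideal.span {Δ}))*v*y₂*z*w) * hPE
    + (((1-v)*δ)*z*w*A) * hQ₂E
    + ((((n:ℕ) : Λ ⧸ Ideal.span {Δ}))*(((m:ℕ) : Λ ⧸ Ideal.span {Δ}))*y₂*z*E) * huvw
end
end

section
/- Let X be a module over ℤ[t^{±1}] with operation x ◁ y = t(x − y) + y, let A be an abelian group, and let ψ : X × X → A be ℤ-bilinear (additive in each variable) and satisfy ψ(t·x, t·y) = ψ(x, y) for all x, y ∈ X. Define φ : X × X → A by φ(x, y) = ψ(x − y, y − t⁻¹·y). Then φ is a quandle 2-cocycle of the Alexander quandle X: φ(x, x) = 0 for all x ∈ X, and φ(x, y) + φ(x ◁ y, z) = φ(x, z) + φ(x ◁ z, y ◁ z) for all x, y, z ∈ X. -/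
open LaurentPolynomial

/-- Let `X` be a module over `ℤ[t^{±1}]` with quandle operation
`x ◁ y = t(x - y) + y`, let `A` be an abelian group, and let `ψ : X × X → A` be
ℤ-bilinear with `ψ(t·x, t·y) = ψ(x, y)`.  Then `φ(x, y) = ψ(x - y, y - t⁻¹·y)` is a
quandle 2-cocycle: `φ(x,x) = 0` and
`φ(x,y) + φ(x ◁ y, z) = φ(x,z) + φ(x ◁ z, y ◁ z)`. -/
theorem stmt_14 (X : Type*) [AddCommGroup X] [Module (LaurentPolynomial ℤ) X]
    (A : Type*) [AddCommGroup A]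
    (ψ : X → X → A)
    (haddl : ∀ x x' y, ψ (x + x') y = ψ x y + ψ x' y)
    (haddr : ∀ x y y', ψ x (y + y') = ψ x y + ψ x y')
    (hinv : ∀ x y, ψ ((T 1 : LaurentPolynomial ℤ) • x) ((T 1 : LaurentPolynomial ℤ) • y) = ψ x y)
    (op : X → X → X)
    (hop : ∀ x y, op x y = (T 1 : LaurentPolynomial ℤ) • (x - y) + y)
    (φ : X → X → A)
    (hφ : ∀ x y, φ x y = ψ (x - y) (y - (T (-1) : LaurentPolynomial ℤ) • y)) :
    (∀ x, φ x x = 0) ∧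
    (∀ x y z, φ x y + φ (op x y) z = φ x z + φ (op x z) (op y z)) := by
  have hzerol : ∀ y, ψ 0 y = 0 := by
    intro y
    have := haddl 0 0 y
    simpa using this.symm
  have hzeror : ∀ x, ψ x 0 = 0 := by
    intro x
    have := haddr x 0 0
    simpa using this.symm
  have hnegl : ∀ x y, ψ (-x) y = -ψ x y := by
    intro x y
    have := haddl x (-x) y
    simp only [add_neg_cancel, hzerol] at this
    exact eq_neg_of_add_eq_zero_right this.symm
  have hnegr : ∀ x y, ψ x (-y) = -ψ x y := by
    intro x y
    have := haddr x y (-y)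
    simp only [add_neg_cancel, hzeror] at this
    exact eq_neg_of_add_eq_zero_right this.symm
  have hsubl : ∀ x x' y, ψ (x - x') y = ψ x y - ψ x' y := by
    intro x x' y
    rw [sub_eq_add_neg, haddl, hnegl, sub_eq_add_neg]
  have hsubr : ∀ x y y', ψ x (y - y') = ψ x y - ψ x y' := by
    intro x y y'
    rw [sub_eq_add_neg, haddr, hnegr, sub_eq_add_neg]
  have hts : ∀ c : X, (T 1 : LaurentPolynomial ℤ) • (T (-1) : LaurentPolynomial ℤ) • c = c := by
    intro c
    rw [smul_smul, ← T_add]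
    norm_num
  have hst : ∀ c : X, (T (-1) : LaurentPolynomial ℤ) • (T 1 : LaurentPolynomial ℤ) • c = c := by
    intro c
    rw [smul_smul, ← T_add]
    norm_num
  have hL1 : ∀ a b, ψ ((T 1 : LaurentPolynomial ℤ) • a) b =
      ψ a ((T (-1) : LaurentPolynomial ℤ) • b) := by
    intro a b
    conv_lhs => rw [← hts b]
    rw [hinv]
  have hL2 : ∀ a b, ψ ((T (-1) : LaurentPolynomial ℤ) • a) b =
      ψ a ((T 1 : LaurentPolynomial ℤ) • b) := by
    intro a b
    rw [← hinv ((T (-1) : LaurentPolynomial ℤ) • a) b, hts]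
  constructor
  · intro x
    simp [hφ, hzerol]
  · intro x y z
    simp only [hφ, hop, smul_sub, smul_add, hsubl, hsubr, haddl, haddr, hL1, hL2, hts, hst]
    abel
end
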